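/- (Correctable erasures on a subsystem code without gauge fixing — necessity.) Let F₂ = ZMod 2, let V = (Fin n → F₂) × (Fin n → F₂) with the symplectic form ω((a,b),(a',b')) = a·b' + a'·b, let G ≤ V be the gauge subspace and S = G ⊓ G^⊥ the stabilizer subspace. Suppose the erasure pattern E ⊆ Fin n is correctable, i.e., V_E ⊓ S^⊥ ≤ G (every Pauli error supported in E with zero syndrome is a gauge operator). Then 2·|E| = finrank(π_E(S)) + finrank(G) − finrank(π_Ē(G)). (In the paper's matrix notation: 2|E| = rank(H_E) + rank(G) − rank(G_Ē).) -/

import Mathlib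

open Module

/-- The `F₂`-vector space `(Fin n → F₂) × (Fin n → F₂)` representing the `n`-qubit
Pauli group modulo phases: `(a, b)` represents `X^a Z^b`. -/
abbrev PauliSp (n : ℕ) := (Fin n → ZMod 2) × (Fin n → ZMod 2)

/-- The symplectic bilinear form `ω((a,b),(a',b')) = a·b' + a'·b` on `PauliSp n`. -/
def omegaBilin (n : ℕ) : PauliSp n →ₗ[ZMod 2] PauliSp n →ₗ[ZMod 2] ZMod 2 :=
  LinearMap.mk₂ (ZMod 2)
    (fun v w => (∑ i, v.1 i * w.2 i) + (∑ i, w.1 i * v.2 i))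
    (by
      intro v v' w
      simp [add_mul, mul_add, Finset.sum_add_distrib]
      ring)
    (by
      intro c v w
      simp [smul_eq_mul, mul_assoc, mul_left_comm, Finset.mul_sum, mul_add])
    (by
      intro v w w'
      simp [add_mul, mul_add, Finset.sum_add_distrib]
      ring)
    (by
      intro c v w
      simp [smul_eq_mul, mul_assoc, mul_left_comm, Finset.mul_sum, mul_add])

/-- The symplectic complement `W^⊥ = {v | ω(v, w) = 0 for all w ∈ W}` of a subspace `W`,
corresponding to the centralizer in the Pauli group. -/
def sperp {n : ℕ} (W : Submodule (ZMod 2) (PauliSp n)) : Submodule (ZMod 2) (PauliSp n) where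
  carrier := {v | ∀ w ∈ W, omegaBilin n v w = 0}
  zero_mem' := by intro w hw; simp
  add_mem' := by
    intro a b ha hb w hw
    rw [map_add, LinearMap.add_apply, ha w hw, hb w hw, add_zero]
  smul_mem' := by
    intro c a ha w hw
    rw [map_smul, LinearMap.smul_apply, ha w hw, smul_zero]

/-- `V_E`: the subspace of Pauli errors supported in the erasure pattern `E`. -/
def suppIn (n : ℕ) (E : Finset (Fin n)) : Submodule (ZMod 2) (PauliSp n) where
  carrier := {v | ∀ i, i ∉ E → v.1 i = 0 ∧ v.2 i = 0}
  zero_mem' := by intro i _; simp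
  add_mem' := by
    intro a b ha hb i hi
    have h1 := ha i hi; have h2 := hb i hi
    constructor
    · simp [h1.1, h2.1]
    · simp [h1.2, h2.2]
  smul_mem' := by
    intro c a ha i hi
    have h := ha i hi
    constructor
    · simp [h.1]
    · simp [h.2]

/-- `π_E`: the coordinate projection onto the qubits in `E`. -/
def projE (n : ℕ) (E : Finset (Fin n)) :
    PauliSp n →ₗ[ZMod 2] ((E → ZMod 2) × (E → ZMod 2)) :=
  LinearMap.prodMap
    (LinearMap.funLeft (ZMod 2) (ZMod 2) (fun i : E => (i : Fin n)))
    (LinearMap.funLeft (ZMod 2) (ZMod 2) (fun i : E => (i : Fin n)))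

section Aux
variable {n : ℕ}

lemma omega_apply (v w : PauliSp n) :
    omegaBilin n v w = (∑ i, v.1 i * w.2 i) + (∑ i, w.1 i * v.2 i) := rfl

lemma omega_symm (v w : PauliSp n) : omegaBilin n v w = omegaBilin n w v := by
  rw [omega_apply, omega_apply, add_comm]

lemma omega_refl : LinearMap.BilinForm.IsRefl (omegaBilin n) := fun v w h => by rwa [omega_symm]

lemma mem_sperp {W : Submodule (ZMod 2) (PauliSp n)} {v : PauliSp n} :
    v ∈ sperp W ↔ ∀ w ∈ W, omegaBilin n v w = 0 := Iff.rfl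

lemma mem_suppIn {E : Finset (Fin n)} {v : PauliSp n} :
    v ∈ suppIn n E ↔ ∀ i, i ∉ E → v.1 i = 0 ∧ v.2 i = 0 := Iff.rfl

lemma omega_nondeg : LinearMap.BilinForm.Nondegenerate (omegaBilin n) := by
  have key : ∀ v : PauliSp n, (∀ w, omegaBilin n v w = 0) → v = 0 := by
   intro v hv
   have h1 : v.1 = 0 := by
    funext i
    have := hv (0, Pi.single i 1)
    simpa [omega_apply, Pi.single_apply, mul_ite, Finset.sum_ite_eq'] using this
   have h2 : v.2 = 0 := by
    funext i
    have := hv (Pi.single i 1, 0)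
    simpa [omega_apply, Pi.single_apply, ite_mul, Finset.sum_ite_eq'] using this
   exact Prod.ext h1 h2
  exact ⟨key, fun v hv => key v (fun w => by rw [omega_symm]; exact hv w)⟩

lemma sperp_eq_orthogonal (W : Submodule (ZMod 2) (PauliSp n)) :
    sperp W = LinearMap.BilinForm.orthogonal (omegaBilin n) W := by
  ext v
  rw [mem_sperp, LinearMap.BilinForm.mem_orthogonal_iff]
  constructor
  · intro h w hw
    rw [← omega_symm]
    exact h w hw
  · intro h w hw
    rw [omega_symm]
    exact h w hw

lemma finrank_pauli : finrank (ZMod 2) (PauliSp n) = 2 * n := by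
  rw [Module.finrank_prod]
  simp [Module.finrank_pi]
  ring

lemma sperp_add_finrank (W : Submodule (ZMod 2) (PauliSp n)) :
    finrank (ZMod 2) W + finrank (ZMod 2) (sperp W) = 2 * n := by
  rw [sperp_eq_orthogonal]
  have h := LinearMap.BilinForm.finrank_add_finrank_orthogonal (B := omegaBilin n) omega_refl W
  rw [LinearMap.BilinForm.orthogonal_top_eq_bot omega_nondeg, inf_bot_eq,
    finrank_bot (ZMod 2) (PauliSp n), add_zero, finrank_pauli] at h
  exact h

lemma sperp_sup (A B : Submodule (ZMod 2) (PauliSp n)) :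
    sperp (A ⊔ B) = sperp A ⊓ sperp B := by
  ext v
  simp only [Submodule.mem_inf, mem_sperp]
  constructor
  · intro h
    exact ⟨fun w hw => h w (Submodule.mem_sup_left hw), fun w hw => h w (Submodule.mem_sup_right hw)⟩
  · rintro ⟨h1, h2⟩ w hw
    have hle : A ⊔ B ≤ LinearMap.ker (omegaBilin n v) :=
      sup_le (fun x hx => LinearMap.mem_ker.mpr (h1 x hx))
        (fun x hx => LinearMap.mem_ker.mpr (h2 x hx))
    exact hle hw

lemma sperp_sperp (W : Submodule (ZMod 2) (PauliSp n)) : sperp (sperp W) = W := by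
  rw [sperp_eq_orthogonal, sperp_eq_orthogonal]
  exact LinearMap.BilinForm.orthogonal_orthogonal omega_nondeg omega_refl W

lemma ker_projE (F : Finset (Fin n)) :
    LinearMap.ker (projE n F) = suppIn n Fᶜ := by
  ext v
  rw [LinearMap.mem_ker, mem_suppIn]
  constructor
  · intro h i hi
    have hiF : i ∈ F := by simpa using hi
    exact ⟨congrFun (congrArg Prod.fst h) ⟨i, hiF⟩, congrFun (congrArg Prod.snd h) ⟨i, hiF⟩⟩
  · intro h
    have h1 : ∀ j : F, v.1 (j : Fin n) = 0 := fun j => (h j (by simp [j.2])).1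
    have h2 : ∀ j : F, v.2 (j : Fin n) = 0 := fun j => (h j (by simp [j.2])).2
    refine Prod.ext ?_ ?_ <;> funext j
    · exact h1 j
    · exact h2 j

lemma projE_surj (F : Finset (Fin n)) : Function.Surjective (projE n F) := by
  have h := LinearMap.funLeft_surjective_of_injective (ZMod 2) (ZMod 2)
    (fun i : F => (i : Fin n)) Subtype.coe_injective
  intro w
  obtain ⟨a, ha⟩ := h w.1
  obtain ⟨b, hb⟩ := h w.2
  exact ⟨(a, b), Prod.ext ha hb⟩

lemma finrank_codom (F : Finset (Fin n)) :
    finrank (ZMod 2) ((F → ZMod 2) × (F → ZMod 2)) = 2 * F.card := by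
  rw [Module.finrank_prod]
  simp [Module.finrank_pi]
  ring

lemma finrank_suppIn (E : Finset (Fin n)) :
    finrank (ZMod 2) (suppIn n E) = 2 * E.card := by
  have h := LinearMap.finrank_range_add_finrank_ker (projE n Eᶜ)
  rw [ker_projE, compl_compl, LinearMap.range_eq_top.mpr (projE_surj Eᶜ),
    finrank_top, finrank_codom, finrank_pauli, Finset.card_compl] at h
  have hc : E.card ≤ n := by
    have := Finset.card_le_univ E
    simpa using this
  simp only [Fintype.card_fin] at h
  omega

lemma sperp_suppIn (E : Finset (Fin n)) : sperp (suppIn n E) = suppIn n Eᶜ := by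
  have hle : suppIn n Eᶜ ≤ sperp (suppIn n E) := by
    intro v hv w hw
    rw [omega_apply]
    have z1 : ∀ i ∈ Finset.univ, v.1 i * w.2 i = 0 := by
      intro i _
      by_cases hi : i ∈ E
      · rw [(hv i (by simp [hi])).1, zero_mul]
      · rw [(hw i hi).2, mul_zero]
    have z2 : ∀ i ∈ Finset.univ, w.1 i * v.2 i = 0 := by
      intro i _
      by_cases hi : i ∈ E
      · rw [(hv i (by simp [hi])).2, mul_zero]
      · rw [(hw i hi).1, zero_mul]
    rw [Finset.sum_eq_zero z1, Finset.sum_eq_zero z2, add_zero]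
  have hc : E.card ≤ n := by simpa using Finset.card_le_univ E
  refine (Submodule.eq_of_le_of_finrank_le hle ?_).symm
  have h1 := sperp_add_finrank (suppIn n E)
  rw [finrank_suppIn] at h1
  rw [finrank_suppIn, Finset.card_compl]
  simp only [Fintype.card_fin]
  omega

set_option synthInstance.maxHeartbeats 1000000 in
set_option maxHeartbeats 1000000 in
lemma finrank_map_add_inf_ker (p : Submodule (ZMod 2) (PauliSp n))
    (F : Finset (Fin n))
    (f : PauliSp n →ₗ[ZMod 2] ((F → ZMod 2) × (F → ZMod 2))) :
    finrank (ZMod 2) (p.map f) + finrank (ZMod 2) ↥(p ⊓ LinearMap.ker f)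
      = finrank (ZMod 2) p := by
  have h := LinearMap.finrank_range_add_finrank_ker (f.domRestrict p)
  have e1 : LinearMap.range (f.domRestrict p) = p.map f := LinearMap.range_domRestrict p f
  have e2 : LinearMap.ker (f.domRestrict p) = (p ⊓ LinearMap.ker f).comap p.subtype := by
    rw [LinearMap.ker_domRestrict, Submodule.comap_inf, Submodule.comap_subtype_self, top_inf_eq]
  have e3 : finrank (ZMod 2) ((p ⊓ LinearMap.ker f).comap p.subtype)
      = finrank (ZMod 2) ↥(p ⊓ LinearMap.ker f) :=
    (Submodule.comapSubtypeEquivOfLe (p := p ⊓ LinearMap.ker f) (q := p) inf_le_left).finrank_eq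
  rw [e1, e2, e3] at h
  exact h

end Aux

/-- Correctable erasures on a subsystem code without gauge fixing (necessity):
if every Pauli error supported in `E` with zero syndrome is a gauge operator
(`V_E ⊓ S^⊥ ≤ G`, where `S = G ⊓ G^⊥`), then
`2·|E| = finrank (π_E S) + finrank G − finrank (π_Ē G)`. -/
theorem correctable_erasure_subsystem_necessary (n : ℕ) (E : Finset (Fin n))
    (G : Submodule (ZMod 2) (PauliSp n))
    (hcorr : suppIn n E ⊓ sperp (G ⊓ sperp G) ≤ G) :
    2 * E.card =
      finrank (ZMod 2) ↥((G ⊓ sperp G).map (projE n E)) + finrank (ZMod 2) ↥G -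
        finrank (ZMod 2) ↥(G.map (projE n Eᶜ)) := by
  set S := G ⊓ sperp G with hS
  have hGperpS : G ≤ sperp S := by
    intro g hg s hs
    rw [omega_symm]
    exact hs.2 g hg
  have hEq : suppIn n E ⊓ sperp S = G ⊓ suppIn n E :=
    le_antisymm (le_inf hcorr inf_le_left)
      (le_inf inf_le_right (inf_le_left.trans hGperpS))
  have r1 : finrank (ZMod 2) (G.map (projE n Eᶜ)) + finrank (ZMod 2) ↥(G ⊓ suppIn n E)
      = finrank (ZMod 2) G := by
    have h := finrank_map_add_inf_ker G Eᶜ (projE n Eᶜ)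
    rwa [ker_projE, compl_compl] at h
  have r2 : finrank (ZMod 2) (S.map (projE n E)) + finrank (ZMod 2) ↥(S ⊓ suppIn n Eᶜ)
      = finrank (ZMod 2) S := by
    have h := finrank_map_add_inf_ker S E (projE n E)
    rwa [ker_projE] at h
  have e1 : suppIn n E ⊓ sperp S = sperp (suppIn n Eᶜ ⊔ S) := by
    rw [sperp_sup, sperp_suppIn, compl_compl]
  have e2 : finrank (ZMod 2) ↥(suppIn n E ⊓ sperp S)
      + finrank (ZMod 2) ↥(suppIn n Eᶜ ⊔ S) = 2 * n := by
    have h := sperp_add_finrank (suppIn n Eᶜ ⊔ S)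
    rw [← e1] at h
    omega
  have e3 : finrank (ZMod 2) ↥(suppIn n Eᶜ ⊔ S) + finrank (ZMod 2) ↥(suppIn n Eᶜ ⊓ S)
      = finrank (ZMod 2) (suppIn n Eᶜ) + finrank (ZMod 2) S :=
    Submodule.finrank_sup_add_finrank_inf_eq _ _
  have e4 : finrank (ZMod 2) (suppIn n Eᶜ) = 2 * (n - E.card) := by
    rw [finrank_suppIn, Finset.card_compl]
    simp
  have e5 : finrank (ZMod 2) ↥(S ⊓ suppIn n Eᶜ) = finrank (ZMod 2) ↥(suppIn n Eᶜ ⊓ S) := by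
    rw [inf_comm]
  have e6 : finrank (ZMod 2) ↥(suppIn n E ⊓ sperp S) = finrank (ZMod 2) ↥(G ⊓ suppIn n E) := by
    rw [hEq]
  have hc : E.card ≤ n := by simpa using Finset.card_le_univ E
  omega
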